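/- Let G = (V, π) be a two-player game with questions in Fin n × Fin n and binary answers (π : Fin n → Fin n → ℝ, π ≥ 0, Σ π = 1; V : Fin 2 → Fin 2 → Fin n → Fin n → ℝ, 0 ≤ V ≤ 1), so that player B₀ has n possible questions. Then the no-signaling value of the (n−1)-st extension equals the classical value of G: ω_ns(G_{n−1}) = ω_c(G), where ω_c(G) is the maximum over deterministic strategies f, g : Fin n → Fin 2 of Σ_{q₁,q₂} π(q₁,q₂) V(f(q₁), g(q₂) | q₁, q₂), and ω_ns(G_{n−1}) is the supremum over (n+1)-partite no-signaling probability distributions p of the expected payoff Σ_{q₁,q₂} π(q₁,q₂) Σ_{a, b₀,…,b_{n−1}} p(a, b₀, …, b_{n−1} | q₁, q₂, …, q₂) · V(a, b₀ | q₁, q₂) · [b₀ = b₁ = ⋯ = b_{n−1}]. -/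
import Mathlib


open Finset

/-- An `m`-partite probability distribution `p outputs inputs` with binary
outputs and inputs in `Fin n` is no-signaling if it is nonnegative, normalized,
and for every subset `S` of the parties the marginal distribution of the
outputs of the parties outside `S` is independent of the inputs of the parties
in `S`. -/
def IsNoSignaling {m n : ℕ} (p : (Fin m → Fin 2) → (Fin m → Fin n) → ℝ) : Prop :=
  (∀ g x, 0 ≤ p g x) ∧
  (∀ x, ∑ g : Fin m → Fin 2, p g x = 1) ∧
  (∀ S : Finset (Fin m), ∀ x x' : Fin m → Fin n, (∀ i ∉ S, x i = x' i) →
    ∀ a : Fin m → Fin 2,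
      (∑ g : Fin m → Fin 2, if ∀ i ∉ S, g i = a i then p g x else 0) =
        ∑ g : Fin m → Fin 2, if ∀ i ∉ S, g i = a i then p g x' else 0)

/-- The expected payoff of an `(N+2)`-partite strategy `p` in the `N`-th
extension `G_N` of the two-player game `G = (V, π)`: party `0` (A) receives
`q₁`, parties `1, …, N+1` (B₀, …, B_N) all receive `q₂`, and the payoff is
`V (a, b₀ | q₁, q₂)` if all the B-players' answers agree and `0` otherwise. -/
noncomputable def extPayoff {n : ℕ} (N : ℕ) (π : Fin n → Fin n → ℝ)
    (V : Fin 2 → Fin 2 → Fin n → Fin n → ℝ)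
    (p : (Fin (N + 2) → Fin 2) → (Fin (N + 2) → Fin n) → ℝ) : ℝ :=
  ∑ q₁ : Fin n, ∑ q₂ : Fin n, π q₁ q₂ *
    ∑ g : Fin (N + 2) → Fin 2,
      if ∀ i : Fin (N + 2), i ≠ 0 → g i = g 1 then
        p g (fun i => if i = 0 then q₁ else q₂) * V (g 0) (g 1) q₁ q₂
      else 0


def iot (n : ℕ) (q : Fin n) : Fin (n - 1 + 2) := ⟨q.val + 1, by have := q.isLt; omega⟩

def xstar (n : ℕ) (q₁ : Fin n) : Fin (n - 1 + 2) → Fin n :=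
  fun i => if i.val = 0 then q₁ else if h : i.val - 1 < n then ⟨i.val - 1, h⟩ else q₁

lemma iot_ne_zero (n : ℕ) (q : Fin n) : iot n q ≠ 0 := by
  intro h
  have := congrArg Fin.val h
  simp [iot] at this

lemma xstar_iot (n : ℕ) (q₁ q : Fin n) : xstar n q₁ (iot n q) = q := by
  have h2 : q.val < n := q.isLt
  simp [xstar, iot, h2]

lemma xstar_zero (n : ℕ) (q₁ : Fin n) : xstar n q₁ 0 = q₁ := by
  simp [xstar]


lemma ns_marg {m n : ℕ} (p : (Fin m → Fin 2) → (Fin m → Fin n) → ℝ) (hp : IsNoSignaling p)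
    (T : Finset (Fin m)) (x x' : Fin m → Fin n) (hxx : ∀ i ∈ T, x i = x' i)
    (F : (Fin m → Fin 2) → ℝ)
    (hF : ∀ g g' : Fin m → Fin 2, (∀ i ∈ T, g i = g' i) → F g = F g') :
    ∑ g : Fin m → Fin 2, p g x * F g = ∑ g : Fin m → Fin 2, p g x' * F g := by
  classical
  set r : (Fin m → Fin 2) → (Fin m → Fin 2) := fun g i => if i ∈ T then g i else 0 with hr
  have hrT : ∀ g : Fin m → Fin 2, ∀ i ∈ T, g i = r g i := by
    intro g i hi; simp [hr, hi]
  have key : ∀ y : Fin m → Fin n, ∑ g : Fin m → Fin 2, p g y * F g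
      = ∑ b : Fin m → Fin 2, (∑ g : Fin m → Fin 2, if r g = b then p g y else 0) * F b := by
    intro y
    have : ∀ b : Fin m → Fin 2, (∑ g : Fin m → Fin 2, if r g = b then p g y else 0) * F b
        = ∑ g : Fin m → Fin 2, if r g = b then p g y * F b else 0 := by
      intro b
      rw [Finset.sum_mul]
      exact Finset.sum_congr rfl fun g _ => by split_ifs <;> simp
    simp only [this]
    rw [Finset.sum_comm]
    refine Finset.sum_congr rfl fun g _ => ?_
    rw [Finset.sum_ite_eq Finset.univ (r g) (fun b => p g y * F b)]
    simp [hF g (r g) (hrT g)]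
  have hco : ∀ b : Fin m → Fin 2,
      (∑ g : Fin m → Fin 2, if r g = b then p g x else 0)
        = ∑ g : Fin m → Fin 2, if r g = b then p g x' else 0 := by
    intro b
    by_cases hb : r b = b
    · have hiff : ∀ g : Fin m → Fin 2, (r g = b) ↔ (∀ i ∉ Tᶜ, g i = b i) := by
        intro g
        constructor
        · intro h i hi
          rw [Finset.notMem_compl] at hi
          rw [hrT g i hi, h]
        · intro h
          funext i
          by_cases hi : i ∈ T
          · have := h i (by simpa using hi)
            simp [hr, hi, this]
          · have hbz : b i = 0 := by
              rw [← hb]; simp [hr, hi]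
            simp [hr, hi, hbz]
      have e1 : (∑ g : Fin m → Fin 2, if r g = b then p g x else 0)
          = ∑ g : Fin m → Fin 2, if ∀ i ∉ Tᶜ, g i = b i then p g x else 0 :=
        Finset.sum_congr rfl fun g _ => if_congr (hiff g) rfl rfl
      have e2 : (∑ g : Fin m → Fin 2, if r g = b then p g x' else 0)
          = ∑ g : Fin m → Fin 2, if ∀ i ∉ Tᶜ, g i = b i then p g x' else 0 :=
        Finset.sum_congr rfl fun g _ => if_congr (hiff g) rfl rfl
      rw [e1, e2]
      exact hp.2.2 Tᶜ x x' (fun i hi => hxx i (by simpa using hi)) b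
    · have : ∀ g : Fin m → Fin 2, ¬ (r g = b) := by
        intro g h
        apply hb
        rw [← h]
        funext i
        by_cases hi : i ∈ T <;> simp [hr, hi]
      simp [this]
  rw [key x, key x']
  exact Finset.sum_congr rfl fun b _ => by rw [hco b]

noncomputable def detP {m n : ℕ} (σ : Fin m → Fin n → Fin 2) :
    (Fin m → Fin 2) → (Fin m → Fin n) → ℝ :=
  fun g x => if g = fun i => σ i (x i) then 1 else 0

lemma detP_ns {m n : ℕ} (σ : Fin m → Fin n → Fin 2) : IsNoSignaling (detP σ) := by
  classical
  refine ⟨?_, ?_, ?_⟩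
  · intro g x
    unfold detP
    split_ifs <;> norm_num
  · intro x
    unfold detP
    rw [Finset.sum_ite_eq' Finset.univ (fun i => σ i (x i)) (fun _ => (1 : ℝ))]
    simp
  · intro S x x' hxx a
    have key : ∀ y : Fin m → Fin n,
        (∑ g : Fin m → Fin 2, if ∀ i ∉ S, g i = a i then detP σ g y else 0)
          = if ∀ i ∉ S, σ i (y i) = a i then 1 else 0 := by
      intro y
      rw [Finset.sum_eq_single (fun i => σ i (y i))]
      · simp [detP]
      · intro g _ hg
        simp [detP, hg]
      · simp
    rw [key x, key x']
    refine if_congr ?_ rfl rfl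
    constructor
    · intro h i hi; rw [← hxx i hi]; exact h i hi
    · intro h i hi; rw [hxx i hi]; exact h i hi

lemma detP_payoff {n : ℕ} (N : ℕ) (π : Fin n → Fin n → ℝ)
    (V : Fin 2 → Fin 2 → Fin n → Fin n → ℝ) (f b : Fin n → Fin 2) :
    extPayoff N π V (detP (fun i : Fin (N + 2) => if i = 0 then f else b)) =
      ∑ q₁ : Fin n, ∑ q₂ : Fin n, π q₁ q₂ * V (f q₁) (b q₂) q₁ q₂ := by
  classical
  unfold extPayoff
  refine Finset.sum_congr rfl fun q₁ _ => Finset.sum_congr rfl fun q₂ _ => ?_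
  congr 1
  set gd : Fin (N + 2) → Fin 2 := fun i => if i = 0 then f q₁ else b q₂ with hgd
  have hfun : (fun i : Fin (N + 2) =>
      (if i = 0 then f else b) ((fun j : Fin (N + 2) => if j = 0 then q₁ else q₂) i)) = gd := by
    funext i
    by_cases hi : i = 0 <;> simp [hgd, hi]
  have hone : (1 : Fin (N + 2)) ≠ 0 := by
    simp [Fin.ext_iff]
  rw [Finset.sum_eq_single gd]
  · have hag : ∀ i : Fin (N + 2), i ≠ 0 → gd i = gd 1 := by
      intro i hi; simp [hgd, hi, hone]
    rw [if_pos hag]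
    have : detP (fun i : Fin (N + 2) => if i = 0 then f else b) gd
        (fun i => if i = 0 then q₁ else q₂) = 1 := by
      unfold detP
      rw [hfun, if_pos rfl]
    rw [this, one_mul]
    simp [hgd, hone]
  · intro g _ hg
    have : detP (fun i : Fin (N + 2) => if i = 0 then f else b) g
        (fun i => if i = 0 then q₁ else q₂) = 0 := by
      unfold detP
      rw [hfun, if_neg hg]
    split_ifs <;> simp [this]
  · simp

noncomputable def bst {n : ℕ} (π : Fin n → Fin n → ℝ)
    (V : Fin 2 → Fin 2 → Fin n → Fin n → ℝ) (g : Fin (n - 1 + 2) → Fin 2) (q₁ : Fin n) :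
    Fin 2 :=
  if (∑ q₂ : Fin n, π q₁ q₂ * V 1 (g (iot n q₂)) q₁ q₂)
      ≤ (∑ q₂ : Fin n, π q₁ q₂ * V 0 (g (iot n q₂)) q₁ q₂) then 0 else 1

lemma bst_le {n : ℕ} (π : Fin n → Fin n → ℝ)
    (V : Fin 2 → Fin 2 → Fin n → Fin n → ℝ) (g : Fin (n - 1 + 2) → Fin 2) (q₁ : Fin n)
    (a : Fin 2) :
    (∑ q₂ : Fin n, π q₁ q₂ * V a (g (iot n q₂)) q₁ q₂)
      ≤ ∑ q₂ : Fin n, π q₁ q₂ * V (bst π V g q₁) (g (iot n q₂)) q₁ q₂ := by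
  unfold bst
  split_ifs with h
  · fin_cases a
    · exact le_refl _
    · exact h
  · fin_cases a
    · exact le_of_lt (lt_of_not_ge h)
    · exact le_refl _

lemma bst_congr {n : ℕ} (π : Fin n → Fin n → ℝ)
    (V : Fin 2 → Fin 2 → Fin n → Fin n → ℝ) (g g' : Fin (n - 1 + 2) → Fin 2) (q₁ : Fin n)
    (h : ∀ q : Fin n, g (iot n q) = g' (iot n q)) :
    bst π V g q₁ = bst π V g' q₁ := by
  unfold bst
  simp only [h]

lemma hard {n : ℕ} (hn : 1 ≤ n) (π : Fin n → Fin n → ℝ) (hπ : ∀ q₁ q₂, 0 ≤ π q₁ q₂)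
    (V : Fin 2 → Fin 2 → Fin n → Fin n → ℝ) (hV : ∀ a b q₁ q₂, 0 ≤ V a b q₁ q₂)
    (p : (Fin (n - 1 + 2) → Fin 2) → (Fin (n - 1 + 2) → Fin n) → ℝ) (hp : IsNoSignaling p)
    (C : ℝ)
    (hC : ∀ f b : Fin n → Fin 2,
      (∑ q₁ : Fin n, ∑ q₂ : Fin n, π q₁ q₂ * V (f q₁) (b q₂) q₁ q₂) ≤ C) :
    extPayoff (n - 1) π V p ≤ C := by
  classical
  set q₀ : Fin n := ⟨0, hn⟩ with hq₀
  unfold extPayoff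
  have step1 : ∀ q₁ q₂ : Fin n,
      (∑ g : Fin (n - 1 + 2) → Fin 2,
        if ∀ i : Fin (n - 1 + 2), i ≠ 0 → g i = g 1 then
          p g (fun i => if i = 0 then q₁ else q₂) * V (g 0) (g 1) q₁ q₂
        else 0)
      ≤ ∑ g : Fin (n - 1 + 2) → Fin 2,
          p g (xstar n q₁) * V (g 0) (g (iot n q₂)) q₁ q₂ := by
    intro q₁ q₂
    have h1 : (∑ g : Fin (n - 1 + 2) → Fin 2,
        if ∀ i : Fin (n - 1 + 2), i ≠ 0 → g i = g 1 then
          p g (fun i => if i = 0 then q₁ else q₂) * V (g 0) (g 1) q₁ q₂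
        else 0)
        ≤ ∑ g : Fin (n - 1 + 2) → Fin 2,
            p g (fun i => if i = 0 then q₁ else q₂) * V (g 0) (g (iot n q₂)) q₁ q₂ := by
      refine Finset.sum_le_sum fun g _ => ?_
      split_ifs with hg
      · rw [hg (iot n q₂) (iot_ne_zero n q₂)]
      · exact mul_nonneg (hp.1 g _) (hV _ _ _ _)
    have h2 : (∑ g : Fin (n - 1 + 2) → Fin 2,
        p g (fun i => if i = 0 then q₁ else q₂) * V (g 0) (g (iot n q₂)) q₁ q₂)
        = ∑ g : Fin (n - 1 + 2) → Fin 2,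
            p g (xstar n q₁) * V (g 0) (g (iot n q₂)) q₁ q₂ := by
      refine ns_marg p hp {0, iot n q₂} _ _ ?_
        (fun g => V (g 0) (g (iot n q₂)) q₁ q₂) ?_
      · intro i hi
        rcases Finset.mem_insert.1 hi with rfl | hi
        · rw [xstar_zero]; simp
        · rw [Finset.mem_singleton] at hi
          subst hi
          rw [xstar_iot]
          simp [iot_ne_zero n q₂]
      · intro g g' hgg
        show V (g 0) (g (iot n q₂)) q₁ q₂ = V (g' 0) (g' (iot n q₂)) q₁ q₂
        rw [hgg 0 (by simp), hgg (iot n q₂) (by simp)]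
    exact h1.trans (le_of_eq h2)
  calc
    (∑ q₁ : Fin n, ∑ q₂ : Fin n, π q₁ q₂ *
      ∑ g : Fin (n - 1 + 2) → Fin 2,
        if ∀ i : Fin (n - 1 + 2), i ≠ 0 → g i = g 1 then
          p g (fun i => if i = 0 then q₁ else q₂) * V (g 0) (g 1) q₁ q₂
        else 0)
      ≤ ∑ q₁ : Fin n, ∑ q₂ : Fin n, π q₁ q₂ *
          ∑ g : Fin (n - 1 + 2) → Fin 2,
            p g (xstar n q₁) * V (g 0) (g (iot n q₂)) q₁ q₂ := by
        refine Finset.sum_le_sum fun q₁ _ => Finset.sum_le_sum fun q₂ _ => ?_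
        exact mul_le_mul_of_nonneg_left (step1 q₁ q₂) (hπ q₁ q₂)
    _ = ∑ q₁ : Fin n, ∑ g : Fin (n - 1 + 2) → Fin 2,
          p g (xstar n q₁) *
            ∑ q₂ : Fin n, π q₁ q₂ * V (g 0) (g (iot n q₂)) q₁ q₂ := by
        refine Finset.sum_congr rfl fun q₁ _ => ?_
        simp only [Finset.mul_sum]
        rw [Finset.sum_comm]
        exact Finset.sum_congr rfl fun g _ => Finset.sum_congr rfl fun q₂ _ => by ring
    _ ≤ ∑ q₁ : Fin n, ∑ g : Fin (n - 1 + 2) → Fin 2,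
          p g (xstar n q₁) *
            ∑ q₂ : Fin n, π q₁ q₂ * V (bst π V g q₁) (g (iot n q₂)) q₁ q₂ := by
        refine Finset.sum_le_sum fun q₁ _ => Finset.sum_le_sum fun g _ => ?_
        exact mul_le_mul_of_nonneg_left (bst_le π V g q₁ (g 0)) (hp.1 g _)
    _ = ∑ q₁ : Fin n, ∑ g : Fin (n - 1 + 2) → Fin 2,
          p g (xstar n q₀) *
            ∑ q₂ : Fin n, π q₁ q₂ * V (bst π V g q₁) (g (iot n q₂)) q₁ q₂ := by
        refine Finset.sum_congr rfl fun q₁ _ => ?_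
        refine ns_marg p hp (Finset.image (iot n) Finset.univ) _ _ ?_ _ ?_
        · intro i hi
          obtain ⟨q, _, rfl⟩ := Finset.mem_image.1 hi
          rw [xstar_iot, xstar_iot]
        · intro g g' hgg
          have hq : ∀ q : Fin n, g (iot n q) = g' (iot n q) := fun q =>
            hgg _ (Finset.mem_image_of_mem _ (Finset.mem_univ q))
          rw [bst_congr π V g g' q₁ hq]
          simp only [hq]
    _ = ∑ g : Fin (n - 1 + 2) → Fin 2,
          p g (xstar n q₀) *
            ∑ q₁ : Fin n, ∑ q₂ : Fin n, π q₁ q₂ * V (bst π V g q₁) (g (iot n q₂)) q₁ q₂ := by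
        rw [Finset.sum_comm]
        exact Finset.sum_congr rfl fun g _ => by rw [Finset.mul_sum]
    _ ≤ ∑ g : Fin (n - 1 + 2) → Fin 2, p g (xstar n q₀) * C := by
        refine Finset.sum_le_sum fun g _ => ?_
        exact mul_le_mul_of_nonneg_left
          (hC (fun q₁ => bst π V g q₁) (fun q => g (iot n q))) (hp.1 g _)
    _ = C := by
        rw [← Finset.sum_mul, hp.2.1, one_mul]

/-- **Theorem 2(ii), final claim (Masanes–Acín–Gisin).** For a two-player game
`G = (V, π)` in which B₀ has `n` possible questions, the no-signaling value of
the `(n−1)`-st extension equals the classical value of `G`: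
`ω_ns(G_{n−1}) = ω_c(G)`. -/
theorem extension_ns_value_eq_classical (n : ℕ)
    (π : Fin n → Fin n → ℝ)
    (hπ : ∀ q₁ q₂, 0 ≤ π q₁ q₂)
    (hπsum : ∑ q₁ : Fin n, ∑ q₂ : Fin n, π q₁ q₂ = 1)
    (V : Fin 2 → Fin 2 → Fin n → Fin n → ℝ)
    (hV : ∀ a b q₁ q₂, 0 ≤ V a b q₁ q₂ ∧ V a b q₁ q₂ ≤ 1) :
    sSup {w : ℝ | ∃ p : (Fin (n - 1 + 2) → Fin 2) → (Fin (n - 1 + 2) → Fin n) → ℝ,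
        IsNoSignaling p ∧ extPayoff (n - 1) π V p = w} =
      ⨆ s : (Fin n → Fin 2) × (Fin n → Fin 2),
        ∑ q₁ : Fin n, ∑ q₂ : Fin n, π q₁ q₂ * V (s.1 q₁) (s.2 q₂) q₁ q₂ := by
  classical
  rcases Nat.eq_zero_or_pos n with rfl | hn
  · exfalso; simp at hπsum
  set payoff : (Fin n → Fin 2) × (Fin n → Fin 2) → ℝ := fun s =>
    ∑ q₁ : Fin n, ∑ q₂ : Fin n, π q₁ q₂ * V (s.1 q₁) (s.2 q₂) q₁ q₂ with hpay
  have hbdd : BddAbove (Set.range payoff) := Set.Finite.bddAbove (Set.finite_range _)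
  have hCle : ∀ f b : Fin n → Fin 2,
      (∑ q₁ : Fin n, ∑ q₂ : Fin n, π q₁ q₂ * V (f q₁) (b q₂) q₁ q₂) ≤ ⨆ s, payoff s :=
    fun f b => le_ciSup hbdd (f, b)
  obtain ⟨s₀, hs₀⟩ := Finite.exists_max payoff
  have hcsup : (⨆ s, payoff s) = payoff s₀ :=
    le_antisymm (ciSup_le hs₀) (le_ciSup hbdd s₀)
  have hV0 : ∀ a b q₁ q₂, 0 ≤ V a b q₁ q₂ := fun a b q₁ q₂ => (hV a b q₁ q₂).1
  have hmem : payoff s₀ ∈ {w : ℝ |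
      ∃ p : (Fin (n - 1 + 2) → Fin 2) → (Fin (n - 1 + 2) → Fin n) → ℝ,
        IsNoSignaling p ∧ extPayoff (n - 1) π V p = w} := by
    refine ⟨detP (fun i : Fin (n - 1 + 2) => if i = 0 then s₀.1 else s₀.2),
      detP_ns _, ?_⟩
    rw [detP_payoff]
  have hub : ∀ w ∈ {w : ℝ |
      ∃ p : (Fin (n - 1 + 2) → Fin 2) → (Fin (n - 1 + 2) → Fin n) → ℝ,
        IsNoSignaling p ∧ extPayoff (n - 1) π V p = w}, w ≤ ⨆ s, payoff s := by
    rintro w ⟨p, hpns, rfl⟩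
    exact hard hn π hπ V hV0 p hpns _ hCle
  refine le_antisymm (csSup_le ⟨payoff s₀, hmem⟩ hub) ?_
  rw [hcsup]
  exact le_csSup ⟨⨆ s, payoff s, hub⟩ hmem
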